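/- Fix n ≥ 2 and parameters ε = (ε_{ji})_{1 ≤ j < i ≤ n−1} with each ε_{ji} ∈ {0, 1/2}. Then the group Γ(ε) is torsion-free, i.e., every element of Γ(ε) other than the identity has infinite order. -/

import Mathlib

/-- The diagonal matrix `C_i = diag(1,…,1,−1,1,…,1)` with `−1` in the `i`-th place
(indices numbered from `0`). -/
def Cmat (n i : ℕ) : Matrix (Fin n) (Fin n) ℝ :=
  Matrix.diagonal (fun a => if (a : ℕ) = i then -1 else 1)

/-- The translation vector `c_i = (1/2) e_{i+1} + ∑_{j<i} ε_{ji} e_j`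
(indices numbered from `0`). -/
noncomputable def cvec (n : ℕ) (ε : ℕ → ℕ → ℝ) (i : ℕ) : Fin n → ℝ :=
  fun m => if (m : ℕ) = i + 1 then 1 / 2 else if (m : ℕ) < i then ε m i else 0

/-- The generating set of `Γ(ε)` inside the group of affine isometries of `ℝ^n`: the affine
maps `x ↦ C_i x + c_i` for `0 ≤ i ≤ n−2` together with all translations by vectors of `ℤ^n`. -/
def gammaEpsSet (n : ℕ) (ε : ℕ → ℕ → ℝ) :
    Set (EuclideanSpace ℝ (Fin n) ≃ᵃⁱ[ℝ] EuclideanSpace ℝ (Fin n)) :=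
  {γ | (∃ i, i < n - 1 ∧ ∀ x, γ x = (Cmat n i).mulVec x + cvec n ε i) ∨
       (∃ lam : Fin n → ℤ, ∀ x, γ x = fun m => x m + (lam m : ℝ))}

/-- The group `Γ(ε)`, as the subgroup of the group of affine isometries of `ℝ^n` generated
by the maps `x ↦ C_i x + c_i` for `0 ≤ i ≤ n−2` and the translations by `ℤ^n`. -/
noncomputable def GammaEps (n : ℕ) (ε : ℕ → ℕ → ℝ) :
    Subgroup (EuclideanSpace ℝ (Fin n) ≃ᵃⁱ[ℝ] EuclideanSpace ℝ (Fin n)) :=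
  Subgroup.closure (gammaEpsSet n ε)

open Classical in
/-- The "expected fractional part" of the translation vector of an element with linear
part `diag A`: coordinate `p` should be congruent mod `ℤ` to
`½·[A_{p-1} = -1] + ∑_{i > p, A_i = -1} ε_{p,i}`. -/
noncomputable def Eterm (n : ℕ) (ε : ℕ → ℕ → ℝ) (A : Fin n → ℝ) (p : Fin n) : ℝ :=
  (if ∃ m : Fin n, (m : ℕ) + 1 = (p : ℕ) ∧ A m = -1 then (1/2 : ℝ) else 0)
  + ∑ i : Fin n, if (p : ℕ) < (i : ℕ) ∧ A i = -1 then ε (p : ℕ) (i : ℕ) else 0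

/-- The key invariant carried by every element of `Γ(ε)`. -/
def GoodP (n : ℕ) (ε : ℕ → ℕ → ℝ)
    (γ : EuclideanSpace ℝ (Fin n) ≃ᵃⁱ[ℝ] EuclideanSpace ℝ (Fin n)) : Prop :=
  ∃ A b : Fin n → ℝ,
    (∀ m, A m = 1 ∨ A m = -1) ∧
    (∀ m : Fin n, (m : ℕ) = n - 1 → A m = 1) ∧
    (∀ p, ∃ z : ℤ, b p = z + Eterm n ε A p) ∧
    (∀ x : EuclideanSpace ℝ (Fin n), ∀ m, γ x m = A m * x m + b m)

lemma isInt_sum {ι : Type*} (s : Finset ι) (f : ι → ℝ)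
    (h : ∀ i ∈ s, ∃ z : ℤ, f i = z) : ∃ z : ℤ, ∑ i ∈ s, f i = z := by
  classical
  choose! g hg using h
  refine ⟨∑ i ∈ s, g i, ?_⟩
  push_cast
  exact Finset.sum_congr rfl hg

/-- `2 · Eterm` is an integer. -/
lemma isInt_two_mul_eterm (n : ℕ) (ε : ℕ → ℕ → ℝ)
    (hε : ∀ j i, j < i → i < n - 1 → ε j i = 0 ∨ ε j i = 1 / 2)
    (A : Fin n → ℝ) (hlast : ∀ m : Fin n, (m : ℕ) = n - 1 → A m = 1) (p : Fin n) :
    ∃ z : ℤ, 2 * Eterm n ε A p = z := by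
  classical
  rw [Eterm, mul_add, Finset.mul_sum]
  have h1 : ∃ z : ℤ, 2 * (if ∃ m : Fin n, (m : ℕ) + 1 = (p : ℕ) ∧ A m = -1
      then (1/2 : ℝ) else 0) = z := by
    split
    · exact ⟨1, by norm_num⟩
    · exact ⟨0, by norm_num⟩
  obtain ⟨z1, hz1⟩ := h1
  have h2 : ∃ z : ℤ, ∑ i : Fin n, 2 * (if (p : ℕ) < (i : ℕ) ∧ A i = -1
      then ε (p : ℕ) (i : ℕ) else 0) = z := by
    apply isInt_sum
    intro i _
    split
    · rename_i hc
      have hi : (i : ℕ) < n - 1 := by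
        have : (i : ℕ) ≠ n - 1 := by
          intro h
          have := hlast i h
          rw [this] at hc
          norm_num at hc
        omega
      rcases hε (p : ℕ) (i : ℕ) hc.1 hi with h | h
      · exact ⟨0, by rw [h]; norm_num⟩
      · exact ⟨1, by rw [h]; norm_num⟩
    · exact ⟨0, by norm_num⟩
  obtain ⟨z2, hz2⟩ := h2
  exact ⟨z1 + z2, by rw [hz1, hz2]; push_cast; ring⟩

/-- Additivity of `Eterm` mod `ℤ`. -/
lemma eterm_mul (n : ℕ) (ε : ℕ → ℕ → ℝ)
    (hε : ∀ j i, j < i → i < n - 1 → ε j i = 0 ∨ ε j i = 1 / 2)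
    (A₁ A₂ : Fin n → ℝ)
    (h1 : ∀ m, A₁ m = 1 ∨ A₁ m = -1) (h2 : ∀ m, A₂ m = 1 ∨ A₂ m = -1)
    (hl1 : ∀ m : Fin n, (m : ℕ) = n - 1 → A₁ m = 1) (p : Fin n) :
    ∃ z : ℤ, Eterm n ε A₁ p + Eterm n ε A₂ p
      = z + Eterm n ε (fun m => A₁ m * A₂ m) p := by
  classical
  have flip : ∃ z : ℤ,
      (if ∃ m : Fin n, (m : ℕ) + 1 = (p : ℕ) ∧ A₁ m = -1 then (1/2 : ℝ) else 0)
      + (if ∃ m : Fin n, (m : ℕ) + 1 = (p : ℕ) ∧ A₂ m = -1 then (1/2 : ℝ) else 0)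
      = z + (if ∃ m : Fin n, (m : ℕ) + 1 = (p : ℕ) ∧ A₁ m * A₂ m = -1
          then (1/2 : ℝ) else 0) := by
    by_cases hp : ∃ m : Fin n, (m : ℕ) + 1 = (p : ℕ)
    · obtain ⟨m₀, hm₀⟩ := hp
      have key : ∀ B : Fin n → ℝ,
          (∃ m : Fin n, (m : ℕ) + 1 = (p : ℕ) ∧ B m = -1) ↔ B m₀ = -1 := by
        intro B
        constructor
        · rintro ⟨m, hm, hB⟩
          have : m = m₀ := by
            apply Fin.ext; omega
          rwa [this] at hB
        · intro hB; exact ⟨m₀, hm₀, hB⟩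
      rw [if_congr (key A₁) rfl rfl, if_congr (key A₂) rfl rfl,
        if_congr (key (fun m => A₁ m * A₂ m)) rfl rfl]
      rcases h1 m₀ with ha | ha
      · rcases h2 m₀ with hb | hb
        · exact ⟨0, by rw [ha, hb]; norm_num⟩
        · exact ⟨0, by rw [ha, hb]; norm_num⟩
      · rcases h2 m₀ with hb | hb
        · exact ⟨0, by rw [ha, hb]; norm_num⟩
        · exact ⟨1, by rw [ha, hb]; norm_num⟩
    · have k1 : ¬(∃ m : Fin n, (m : ℕ) + 1 = (p : ℕ) ∧ A₁ m = -1) := by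
        rintro ⟨m, hm, -⟩; exact hp ⟨m, hm⟩
      have k2 : ¬(∃ m : Fin n, (m : ℕ) + 1 = (p : ℕ) ∧ A₂ m = -1) := by
        rintro ⟨m, hm, -⟩; exact hp ⟨m, hm⟩
      have k3 : ¬(∃ m : Fin n, (m : ℕ) + 1 = (p : ℕ) ∧ A₁ m * A₂ m = -1) := by
        rintro ⟨m, hm, -⟩; exact hp ⟨m, hm⟩
      rw [if_neg k1, if_neg k2, if_neg k3]
      exact ⟨0, by norm_num⟩
  have sums : ∀ i : Fin n, ∃ z : ℤ,
      (if (p : ℕ) < (i : ℕ) ∧ A₁ i = -1 then ε (p : ℕ) (i : ℕ) else 0)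
      + (if (p : ℕ) < (i : ℕ) ∧ A₂ i = -1 then ε (p : ℕ) (i : ℕ) else 0)
      = z + (if (p : ℕ) < (i : ℕ) ∧ A₁ i * A₂ i = -1
          then ε (p : ℕ) (i : ℕ) else 0) := by
    intro i
    rcases h1 i with ha | ha
    · rcases h2 i with hb | hb
      · exact ⟨0, by rw [ha, hb]; norm_num⟩
      · refine ⟨0, ?_⟩
        rw [ha, hb]
        by_cases hpi : (p : ℕ) < (i : ℕ) <;> norm_num [hpi]
    · rcases h2 i with hb | hb
      · refine ⟨0, ?_⟩
        rw [ha, hb]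
        by_cases hpi : (p : ℕ) < (i : ℕ) <;> norm_num [hpi]
      · -- both flipped
        by_cases hpi : (p : ℕ) < (i : ℕ)
        · have hi : (i : ℕ) < n - 1 := by
            have hne : (i : ℕ) ≠ n - 1 := by
              intro h
              have := hl1 i h
              rw [this] at ha; norm_num at ha
            have := i.2
            omega
          rcases hε (p : ℕ) (i : ℕ) hpi hi with h | h
          · exact ⟨0, by rw [ha, hb, h]; norm_num [hpi]⟩
          · exact ⟨1, by rw [ha, hb, h]; norm_num [hpi]⟩
        · exact ⟨0, by rw [ha, hb]; norm_num [hpi]⟩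
  choose g hg using sums
  obtain ⟨zf, hzf⟩ := flip
  refine ⟨zf + ∑ i : Fin n, g i, ?_⟩
  simp only [Eterm]
  have hsum : (∑ i : Fin n, if (p : ℕ) < (i : ℕ) ∧ A₁ i = -1 then ε (p : ℕ) (i : ℕ) else 0)
      + (∑ i : Fin n, if (p : ℕ) < (i : ℕ) ∧ A₂ i = -1 then ε (p : ℕ) (i : ℕ) else 0)
      = (∑ i : Fin n, ((g i : ℝ)))
        + ∑ i : Fin n, (if (p : ℕ) < (i : ℕ) ∧ A₁ i * A₂ i = -1
            then ε (p : ℕ) (i : ℕ) else 0) := by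
    rw [← Finset.sum_add_distrib, ← Finset.sum_add_distrib]
    exact Finset.sum_congr rfl (fun i _ => hg i)
  push_cast
  linarith [hzf, hsum]

/-- Every element of `Γ(ε)` satisfies the invariant. -/
lemma goodP_of_mem (n : ℕ) (hn : 2 ≤ n) (ε : ℕ → ℕ → ℝ)
    (hε : ∀ j i, j < i → i < n - 1 → ε j i = 0 ∨ ε j i = 1 / 2)
    (γ : EuclideanSpace ℝ (Fin n) ≃ᵃⁱ[ℝ] EuclideanSpace ℝ (Fin n))
    (hγ : γ ∈ GammaEps n ε) : GoodP n ε γ := by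
  classical
  induction hγ using Subgroup.closure_induction with
  | mem g hg =>
    rcases hg with ⟨i, hi, hform⟩ | ⟨lam, hform⟩
    · -- generator g_i
      refine ⟨fun m => if (m : ℕ) = i then -1 else 1, cvec n ε i, ?_, ?_, ?_, ?_⟩
      · intro m
        show (if (m : ℕ) = i then (-1 : ℝ) else 1) = 1 ∨
          (if (m : ℕ) = i then (-1 : ℝ) else 1) = -1
        split
        · exact Or.inr rfl
        · exact Or.inl rfl
      · intro m hm
        show (if (m : ℕ) = i then (-1 : ℝ) else 1) = 1
        rw [if_neg (by omega)]
      · intro p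
        refine ⟨0, ?_⟩
        have hflip : (∃ m : Fin n, (m : ℕ) + 1 = (p : ℕ) ∧
            (if (m : ℕ) = i then (-1 : ℝ) else 1) = -1) ↔ (p : ℕ) = i + 1 := by
          constructor
          · rintro ⟨m, hm, hB⟩
            by_cases h : (m : ℕ) = i
            · omega
            · rw [if_neg h] at hB; norm_num at hB
          · intro h
            refine ⟨⟨i, by omega⟩, by simp [h], by simp⟩
        have hsum : (∑ j : Fin n, if (p : ℕ) < (j : ℕ) ∧
              (if (j : ℕ) = i then (-1 : ℝ) else 1) = -1
              then ε (p : ℕ) (j : ℕ) else 0)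
            = if (p : ℕ) < i then ε (p : ℕ) i else 0 := by
          have hi' : i < n := by omega
          rw [Finset.sum_eq_single_of_mem (⟨i, hi'⟩ : Fin n) (Finset.mem_univ _)]
          · by_cases h : (p : ℕ) < i <;> simp [h]
          · intro j _ hj
            rw [if_neg]
            rintro ⟨-, hc⟩
            by_cases h : (j : ℕ) = i
            · exact hj (Fin.ext h)
            · rw [if_neg h] at hc; norm_num at hc
        simp only [Eterm, cvec]
        rw [if_congr hflip rfl rfl, hsum]
        push_cast
        rw [zero_add]
        by_cases h : (p : ℕ) = i + 1
        · have h2 : ¬ (p : ℕ) < i := by omega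
          norm_num [h, h2]
        · by_cases h2 : (p : ℕ) < i <;> norm_num [h, h2]
      · intro x m
        rw [hform x]
        have : ((Cmat n i).mulVec x + cvec n ε i) m
            = (Cmat n i).mulVec x m + cvec n ε i m := rfl
        rw [this, Cmat, Matrix.mulVec_diagonal]
    · -- translation
      refine ⟨fun _ => 1, fun m => (lam m : ℝ), fun m => Or.inl rfl,
        fun m _ => rfl, ?_, ?_⟩
      · intro p
        refine ⟨lam p, ?_⟩
        rw [Eterm]
        rw [if_neg (by rintro ⟨m, -, hc⟩; norm_num at hc)]
        rw [Finset.sum_eq_zero (fun i _ => by rw [if_neg (by rintro ⟨-, hc⟩; norm_num at hc)])]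
        norm_num
      · intro x m
        rw [hform x]
        norm_num
  | one =>
    refine ⟨fun _ => 1, fun _ => 0, fun m => Or.inl rfl, fun m _ => rfl, ?_, ?_⟩
    · intro p
      refine ⟨0, ?_⟩
      rw [Eterm]
      rw [if_neg (by rintro ⟨m, -, hc⟩; norm_num at hc)]
      rw [Finset.sum_eq_zero (fun i _ => by rw [if_neg (by rintro ⟨-, hc⟩; norm_num at hc)])]
      norm_num
    · intro x m; simp
  | mul g1 g2 hg1 hg2 ih1 ih2 =>
    obtain ⟨A₁, b₁, hA1, hl1, hc1, hf1⟩ := ih1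
    obtain ⟨A₂, b₂, hA2, hl2, hc2, hf2⟩ := ih2
    refine ⟨fun m => A₁ m * A₂ m, fun m => A₁ m * b₂ m + b₁ m, ?_, ?_, ?_, ?_⟩
    · intro m
      show A₁ m * A₂ m = 1 ∨ A₁ m * A₂ m = -1
      rcases hA1 m with h | h <;> rcases hA2 m with h' | h' <;> rw [h, h'] <;> norm_num
    · intro m hm
      show A₁ m * A₂ m = 1
      rw [hl1 m hm, hl2 m hm]; norm_num
    · intro p
      show ∃ z : ℤ, A₁ p * b₂ p + b₁ p = z + Eterm n ε (fun m => A₁ m * A₂ m) p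
      obtain ⟨z1, hz1⟩ := hc1 p
      obtain ⟨z2, hz2⟩ := hc2 p
      obtain ⟨w, hw⟩ := eterm_mul n ε hε A₁ A₂ hA1 hA2 hl1 p
      obtain ⟨t2, ht2⟩ := isInt_two_mul_eterm n ε hε A₂ hl2 p
      rcases hA1 p with h | h
      · refine ⟨z1 + z2 + w, ?_⟩
        rw [h, hz1, hz2]
        push_cast
        linarith [hw]
      · refine ⟨z1 - z2 - t2 + w, ?_⟩
        rw [h, hz1, hz2]
        push_cast
        linarith [hw, ht2]
    · intro x m
      show (g1 * g2) x m = A₁ m * A₂ m * x m + (A₁ m * b₂ m + b₁ m)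
      have : (g1 * g2) x = g1 (g2 x) := rfl
      rw [this, hf1 (g2 x) m, hf2 x m]
      ring
  | inv g hg ih =>
    obtain ⟨A, b, hA, hl, hc, hf⟩ := ih
    refine ⟨A, fun m => -(A m * b m), hA, hl, ?_, ?_⟩
    · intro p
      show ∃ z : ℤ, -(A p * b p) = z + Eterm n ε A p
      obtain ⟨z, hz⟩ := hc p
      obtain ⟨t, ht⟩ := isInt_two_mul_eterm n ε hε A hl p
      rcases hA p with h | h
      · refine ⟨-z - t, ?_⟩
        rw [h, hz]
        push_cast
        linarith [ht]
      · refine ⟨z, ?_⟩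
        rw [h, hz]
        ring
    · intro x m
      have key : g (WithLp.toLp 2 (fun k => A k * x k - A k * b k) : EuclideanSpace ℝ (Fin n)) = x := by
        ext k
        rw [hf _ k]
        show A k * (A k * x k - A k * b k) + b k = x k
        rcases hA k with h | h <;> rw [h] <;> ring
      have : g⁻¹ x = (WithLp.toLp 2 (fun k => A k * x k - A k * b k) : EuclideanSpace ℝ (Fin n)) := by
        conv_lhs => rw [← key]
        exact g.symm_apply_apply _
      rw [this]
      show A m * x m - A m * b m = A m * x m + -(A m * b m)
      ring

/-- `Γ(ε)` is torsion-free: every element other than the identity has infinite order. -/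
theorem gammaEps_torsionFree (n : ℕ) (hn : 2 ≤ n) (ε : ℕ → ℕ → ℝ)
    (hε : ∀ j i, j < i → i < n - 1 → ε j i = 0 ∨ ε j i = 1 / 2) :
    ∀ γ : GammaEps n ε, γ ≠ 1 → ¬IsOfFinOrder γ := by
  classical
  intro γ hne hfin
  obtain ⟨k, hk0, hk⟩ := isOfFinOrder_iff_pow_eq_one.mp hfin
  obtain ⟨A, b, hA, hl, hc, hf⟩ := goodP_of_mem n hn ε hε (γ : _) γ.2
  have hpowk : ((γ : EuclideanSpace ℝ (Fin n) ≃ᵃⁱ[ℝ] EuclideanSpace ℝ (Fin n)))^k = 1 := by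
    have := congrArg (Subtype.val) hk
    push_cast at this
    exact this
  -- iteration formula at coordinates fixed by A
  have iter : ∀ (p : Fin n), A p = 1 → ∀ (j : ℕ) (x : EuclideanSpace ℝ (Fin n)),
      (((γ : EuclideanSpace ℝ (Fin n) ≃ᵃⁱ[ℝ] EuclideanSpace ℝ (Fin n)))^j) x p
        = x p + j * b p := by
    intro p hp j
    induction j with
    | zero => intro x; simp
    | succ j ih =>
      intro x
      have : (((γ : EuclideanSpace ℝ (Fin n) ≃ᵃⁱ[ℝ] EuclideanSpace ℝ (Fin n)))^(j+1)) x
          = (((γ : EuclideanSpace ℝ (Fin n) ≃ᵃⁱ[ℝ] EuclideanSpace ℝ (Fin n)))^j)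
              ((γ : EuclideanSpace ℝ (Fin n) ≃ᵃⁱ[ℝ] EuclideanSpace ℝ (Fin n)) x) := by
        rw [pow_succ]
        rfl
      rw [this, ih, hf x p, hp]
      push_cast
      ring
  by_cases hall : ∀ m, A m = 1
  · -- pure translation case
    have hb : ∀ m, b m = 0 := by
      intro m
      have h0 := iter m (hall m) k 0
      rw [hpowk] at h0
      have : (0 : EuclideanSpace ℝ (Fin n)) m = 0 := rfl
      simp only [AffineIsometryEquiv.coe_one, id_eq] at h0
      rw [this] at h0
      have hk' : (k : ℝ) ≠ 0 := Nat.cast_ne_zero.mpr (by omega)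
      have := h0.symm
      rw [zero_add] at this
      exact (mul_eq_zero.mp this).resolve_left hk'
    apply hne
    apply Subtype.ext
    apply AffineIsometryEquiv.ext
    intro x
    ext m
    show (γ : EuclideanSpace ℝ (Fin n) ≃ᵃⁱ[ℝ] EuclideanSpace ℝ (Fin n)) x m = x m
    rw [hf x m, hall m, hb m]
    ring
  · -- nontrivial linear part
    push_neg at hall
    obtain ⟨m0, hm0⟩ := hall
    have hm0' : A m0 = -1 := (hA m0).resolve_left hm0
    set S : Finset (Fin n) := Finset.univ.filter (fun m => A m = -1) with hS
    have hSne : S.Nonempty := ⟨m0, by simp [hS, hm0']⟩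
    set m := S.max' hSne with hm
    have hmS : m ∈ S := S.max'_mem hSne
    have hmA : A m = -1 := by
      have := hmS
      simp [hS] at this
      exact this
    have hmax : ∀ j : Fin n, A j = -1 → j ≤ m := by
      intro j hj
      exact S.le_max' j (by simp [hS, hj])
    have hmlt : (m : ℕ) < n - 1 := by
      have hne' : (m : ℕ) ≠ n - 1 := by
        intro h
        rw [hl m h] at hmA
        norm_num at hmA
      have := m.2
      omega
    set p : Fin n := ⟨(m : ℕ) + 1, by omega⟩ with hp
    have hAp : A p = 1 := by
      rcases hA p with h | h
      · exact h
      · have := hmax p h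
        have : (p : ℕ) ≤ (m : ℕ) := this
        simp [hp] at this
    -- compute Eterm at p : it equals 1/2
    have hE : Eterm n ε A p = 1/2 := by
      rw [Eterm]
      rw [if_pos ⟨m, by simp [hp], hmA⟩]
      rw [Finset.sum_eq_zero]
      · norm_num
      · intro i _
        rw [if_neg]
        rintro ⟨hlt, hi⟩
        have := hmax i hi
        have : (i : ℕ) ≤ (m : ℕ) := this
        simp [hp] at hlt
        omega
    obtain ⟨z, hz⟩ := hc p
    rw [hE] at hz
    have h0 := iter p hAp k 0
    rw [hpowk] at h0
    simp only [AffineIsometryEquiv.coe_one, id_eq] at h0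
    have h00 : (0 : EuclideanSpace ℝ (Fin n)) p = 0 := rfl
    rw [h00, zero_add] at h0
    have hbp : b p = 0 := by
      have hk' : (k : ℝ) ≠ 0 := Nat.cast_ne_zero.mpr (by omega)
      exact (mul_eq_zero.mp h0.symm).resolve_left hk'
    rw [hbp] at hz
    have : (2 * z + 1 : ℝ) = 0 := by linarith
    have : (2 * z + 1 : ℤ) = 0 := by exact_mod_cast this
    omega
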